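/- For all E₁, E₂ ∈ [−1,1] and all ω₁, ω₂ ∈ [0,1], the inequality (1/2)(√(1+E₁)·√(1+E₂) + √(1−E₁)·√(1−E₂)) ≥ √(1−ω₁)·√(1−ω₂) − √(ω₁)·√(ω₂) holds if and only if |arcsin E₁ − arcsin E₂| ≤ 2(arcsin √ω₁ + arcsin √ω₂). -/

import Mathlib

/-!
Put `θᵢ = arcsin Eᵢ` and `αᵢ = arcsin √ωᵢ`. The half-angle identities
`√(1 ± sin θ) = cos (θ/2) ± sin (θ/2)` turn the right-hand side into `cos ((θ₁ - θ₂)/2)`, and the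
addition formula turns the left-hand side into `cos (α₁ + α₂)`. Both angles `|θ₁ - θ₂|/2` and
`α₁ + α₂` lie in `[0, π]`, where the cosine is strictly decreasing.
-/

open Real

namespace Real

lemma cos_half_add_sin_half_nonneg {θ : ℝ} (h₁ : -(π / 2) ≤ θ) (h₂ : θ ≤ 3 * π / 2) :
    0 ≤ cos (θ / 2) + sin (θ / 2) := by
  have hsin : 0 ≤ sin (θ / 2 + π / 4) :=
    sin_nonneg_of_nonneg_of_le_pi (by linarith) (by linarith)
  rw [sin_add, sin_pi_div_four, cos_pi_div_four] at hsin
  nlinarith [sqrt_pos.mpr (two_pos : (0 : ℝ) < 2)]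

lemma one_add_sin_eq_sq_half (θ : ℝ) : 1 + sin θ = (cos (θ / 2) + sin (θ / 2)) ^ 2 := by
  conv_lhs => rw [← mul_div_cancel₀ θ two_ne_zero, sin_two_mul]
  linear_combination -sin_sq_add_cos_sq (θ / 2)

lemma sqrt_one_add_sin {θ : ℝ} (h₁ : -(π / 2) ≤ θ) (h₂ : θ ≤ 3 * π / 2) :
    √(1 + sin θ) = cos (θ / 2) + sin (θ / 2) := by
  rw [one_add_sin_eq_sq_half, sqrt_sq (cos_half_add_sin_half_nonneg h₁ h₂)]

lemma sqrt_one_sub_sin {θ : ℝ} (h₁ : -(3 * π / 2) ≤ θ) (h₂ : θ ≤ π / 2) :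
    √(1 - sin θ) = cos (θ / 2) - sin (θ / 2) := by
  have h := sqrt_one_add_sin (θ := -θ) (by linarith) (by linarith)
  rwa [sin_neg, neg_div, cos_neg, sin_neg, ← sub_eq_add_neg, ← sub_eq_add_neg] at h

lemma cos_half_arcsin_sub_arcsin {x y : ℝ} (hx : x ∈ Set.Icc (-1 : ℝ) 1)
    (hy : y ∈ Set.Icc (-1 : ℝ) 1) :
    cos ((arcsin x - arcsin y) / 2) = (√(1 + x) * √(1 + y) + √(1 - x) * √(1 - y)) / 2 := by
  have hpi := pi_pos
  have key {z : ℝ} (hz : z ∈ Set.Icc (-1 : ℝ) 1) :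
      √(1 + z) = cos (arcsin z / 2) + sin (arcsin z / 2) ∧
        √(1 - z) = cos (arcsin z / 2) - sin (arcsin z / 2) := by
    have h₁ := neg_pi_div_two_le_arcsin z
    have h₂ := arcsin_le_pi_div_two z
    have hadd := sqrt_one_add_sin h₁ (by linarith)
    have hsub := sqrt_one_sub_sin (by linarith) h₂
    rw [sin_arcsin' hz] at hadd hsub
    exact ⟨hadd, hsub⟩
  rw [(key hx).1, (key hx).2, (key hy).1, (key hy).2, sub_div, cos_sub]
  ring

lemma cos_arcsin_add_arcsin {x y : ℝ} (hx : x ∈ Set.Icc (-1 : ℝ) 1)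
    (hy : y ∈ Set.Icc (-1 : ℝ) 1) :
    cos (arcsin x + arcsin y) = √(1 - x ^ 2) * √(1 - y ^ 2) - x * y := by
  rw [cos_add, cos_arcsin, cos_arcsin, sin_arcsin' hx, sin_arcsin' hy]

lemma cos_arcsin_sqrt_add_arcsin_sqrt {a b : ℝ} (ha : a ∈ Set.Icc (0 : ℝ) 1)
    (hb : b ∈ Set.Icc (0 : ℝ) 1) :
    cos (arcsin √a + arcsin √b) = √(1 - a) * √(1 - b) - √a * √b := by
  have mem {c : ℝ} (hc : c ∈ Set.Icc (0 : ℝ) 1) : √c ∈ Set.Icc (-1 : ℝ) 1 :=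
    ⟨by linarith [sqrt_nonneg c], sqrt_le_one.mpr hc.2⟩
  rw [cos_arcsin_add_arcsin (mem ha) (mem hb), sq_sqrt ha.1, sq_sqrt hb.1]

end Real

open Set in
theorem sqrt_ineq_iff_arcsin_ineq (E₁ E₂ ω₁ ω₂ : ℝ)
    (hE₁ : E₁ ∈ Set.Icc (-1 : ℝ) 1) (hE₂ : E₂ ∈ Set.Icc (-1 : ℝ) 1)
    (hω₁ : ω₁ ∈ Set.Icc (0 : ℝ) 1) (hω₂ : ω₂ ∈ Set.Icc (0 : ℝ) 1) :
    Real.sqrt (1 - ω₁) * Real.sqrt (1 - ω₂) -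
        Real.sqrt ω₁ * Real.sqrt ω₂ ≤
      (Real.sqrt (1 + E₁) * Real.sqrt (1 + E₂) +
        Real.sqrt (1 - E₁) * Real.sqrt (1 - E₂)) / 2 ↔
    |Real.arcsin E₁ - Real.arcsin E₂| ≤
      2 * (Real.arcsin (Real.sqrt ω₁) + Real.arcsin (Real.sqrt ω₂)) := by
  rw [← cos_arcsin_sqrt_add_arcsin_sqrt hω₁ hω₂, ← cos_half_arcsin_sub_arcsin hE₁ hE₂,
    ← cos_abs ((arcsin E₁ - arcsin E₂) / 2), abs_div, abs_two]
  have hsum : arcsin √ω₁ + arcsin √ω₂ ∈ Icc 0 π :=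
    ⟨add_nonneg (arcsin_nonneg.mpr (sqrt_nonneg _)) (arcsin_nonneg.mpr (sqrt_nonneg _)),
      by linarith [arcsin_le_pi_div_two √ω₁, arcsin_le_pi_div_two √ω₂]⟩
  have hdiff : |arcsin E₁ - arcsin E₂| / 2 ∈ Icc 0 π := by
    have h : |arcsin E₁ - arcsin E₂| ≤ π := abs_sub_le_iff.mpr
      ⟨by linarith [arcsin_le_pi_div_two E₁, neg_pi_div_two_le_arcsin E₂],
        by linarith [arcsin_le_pi_div_two E₂, neg_pi_div_two_le_arcsin E₁]⟩
    exact ⟨by positivity, by linarith [pi_pos]⟩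
  rw [strictAntiOn_cos.le_iff_ge hsum hdiff, div_le_iff₀' two_pos]
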